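/- Let ℓ ≥ 2 and let W be a P_ℓ-witness structure of a finite simple graph G with W(p_1) = {x} and W(p_ℓ) = {y}. Then the distance between x and y in G is at least ℓ − 1. -/
import Mathlib


/-- `W` is an `H`-witness structure of `G`: a family of pairwise disjoint nonempty
connected subsets of `V(G)` covering `V(G)` such that distinct `h₁ h₂` are adjacent in `H`
iff there is an edge of `G` between `W h₁` and `W h₂`. -/
def IsWitnessStructure {V U : Type*} (G : SimpleGraph V) (H : SimpleGraph U)
    (W : U → Set V) : Prop :=
  (∀ h, (W h).Nonempty) ∧
  (∀ h₁ h₂, h₁ ≠ h₂ → Disjoint (W h₁) (W h₂)) ∧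
  (⋃ h, W h) = Set.univ ∧
  (∀ h, (G.induce (W h)).Connected) ∧
  (∀ h₁ h₂, h₁ ≠ h₂ → ((∃ a ∈ W h₁, ∃ b ∈ W h₂, G.Adj a b) ↔ H.Adj h₁ h₂))

/-- `G` contains `H` as a contraction. -/
def ContainsAsContraction {V U : Type*} (G : SimpleGraph V) (H : SimpleGraph U) : Prop :=
  ∃ W : U → Set V, IsWitnessStructure G H W

theorem stmt_2 {V : Type} [Fintype V] (G : SimpleGraph V) (ℓ : ℕ) (hℓ : 2 ≤ ℓ)
    (W : Fin ℓ → Set V) (hW : IsWitnessStructure G (SimpleGraph.pathGraph ℓ) W)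
    (x y : V) (hx : W ⟨0, by omega⟩ = {x}) (hy : W ⟨ℓ - 1, by omega⟩ = {y}) :
    ℓ - 1 ≤ G.dist x y := by
  obtain ⟨hne, hdisj, hcov, hconn, hadj⟩ := hW
  -- every vertex lies in some class
  have hmem : ∀ v : V, ∃ h, v ∈ W h := by
    intro v
    have : v ∈ ⋃ h, W h := by rw [hcov]; trivial
    simpa using this
  classical
  set f : V → Fin ℓ := fun v => (hmem v).choose with hf
  have hfmem : ∀ v, v ∈ W (f v) := fun v => (hmem v).choose_spec
  have huniq : ∀ v (i : Fin ℓ), v ∈ W i → f v = i := by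
    intro v i hv
    by_contra h
    exact (hdisj _ _ h).ne_of_mem (hfmem v) hv rfl
  -- adjacent vertices have classes at Nat.dist ≤ 1
  have hstep : ∀ {a b : V}, G.Adj a b → Nat.dist (f a).val (f b).val ≤ 1 := by
    intro a b hab
    by_cases h : f a = f b
    · rw [h]; simp [Nat.dist_self]
    · have : (SimpleGraph.pathGraph ℓ).Adj (f a) (f b) :=
        (hadj _ _ h).mp ⟨a, hfmem a, b, hfmem b, hab⟩
      rw [SimpleGraph.pathGraph_adj] at this
      rcases this with h1 | h1 <;> simp [Nat.dist] <;> omega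
  -- along a walk, class distance ≤ length
  have hwalk : ∀ {a b : V} (p : G.Walk a b), Nat.dist (f a).val (f b).val ≤ p.length := by
    intro a b p
    induction p with
    | nil => simp [Nat.dist_self]
    | cons h p ih =>
        calc Nat.dist _ _ ≤ _ + _ := Nat.dist.triangle_inequality _ _ _
        _ ≤ 1 + p.length := Nat.add_le_add (hstep h) ih
        _ = (SimpleGraph.Walk.cons h p).length := by simp [Nat.add_comm]
  -- reachability: x reachable to some vertex of each class, by induction
  have hxW : x ∈ W ⟨0, by omega⟩ := by rw [hx]; rfl
  have hyW : y ∈ W ⟨ℓ - 1, by omega⟩ := by rw [hy]; rfl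
  have hwithin : ∀ (i : Fin ℓ) (a b : V), a ∈ W i → b ∈ W i → G.Reachable a b := by
    intro i a b ha hb
    have := (hconn i).preconnected ⟨a, ha⟩ ⟨b, hb⟩
    exact this.map (SimpleGraph.Embedding.induce (W i)).toHom
  have hreach : ∀ k : ℕ, ∀ hk : k < ℓ, ∀ v ∈ W ⟨k, hk⟩, G.Reachable x v := by
    intro k
    induction k with
    | zero => intro hk v hv; exact hwithin _ _ _ hxW hv
    | succ n ih =>
        intro hk v hv
        have hn : n < ℓ := by omega
        have hne' : (⟨n, hn⟩ : Fin ℓ) ≠ ⟨n + 1, hk⟩ := by simp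
        have hadj' : (SimpleGraph.pathGraph ℓ).Adj ⟨n, hn⟩ ⟨n + 1, hk⟩ := by
          rw [SimpleGraph.pathGraph_adj]; left; rfl
        obtain ⟨a, ha, b, hb, hab⟩ := (hadj _ _ hne').mpr hadj'
        exact ((ih hn a ha).trans hab.reachable).trans (hwithin _ _ _ hb hv)
  have hr : G.Reachable x y := hreach (ℓ - 1) (by omega) y hyW
  obtain ⟨p, hp⟩ := hr.exists_walk_length_eq_dist
  have := hwalk p
  rw [huniq x _ hxW, huniq y _ hyW] at this
  simp only [Nat.dist] at this
  omega
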